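/- arXiv:1312.1544 — 10 statements merged into one kernel-verified Lean document; each statement's English description precedes it below -/
import Mathlib

section
/- There exists a digraph G = (V,E) and a subset U ⊆ V such that Inf^∞ U ≠ Hull U. Concretely, for V = ℕ and E = {(n,0) | n ≥ 1} ∪ {(n,n+1) | n ≥ 1}, one has Inf^∞{1} = V \ {0} while Hull{1} = V. -/
/-- Inflation of a vertex set in a digraph with arc relation `E`. -/
def dInfl {V : Type*} (E : V → V → Prop) (U : Set V) : Set V :=
  U ∪ {v | (∃ u, E u v) ∧ ∀ u, E u v → u ∈ U}

/-- Hyperinflation: union of all iterates of the inflation. -/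
def dInflStar {V : Type*} (E : V → V → Prop) (U : Set V) : Set V :=
  ⋃ n : ℕ, (dInfl E)^[n] U

private lemma aux_iter (n : ℕ) :
    (dInfl (fun m n => 1 ≤ m ∧ (n = 0 ∨ n = m + 1)))^[n] ({1} : Set ℕ)
      = {k | 1 ≤ k ∧ k ≤ n + 1} := by
  induction n with
  | zero => ext k; simp; omega
  | succ n ih =>
    rw [Function.iterate_succ_apply', ih]
    ext v
    simp only [dInfl, Set.mem_union, Set.mem_setOf_eq]
    constructor
    · rintro (⟨h1, h2⟩ | ⟨⟨u, hu1, hu2⟩, hall⟩)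
      · exact ⟨h1, by omega⟩
      · rcases hu2 with hv | hv
        · have := hall (n + 2) ⟨by omega, Or.inl hv⟩
          omega
        · have := hall u ⟨hu1, Or.inr hv⟩
          subst hv; exact ⟨by omega, by omega⟩
    · rintro ⟨h1, h2⟩
      rcases Nat.lt_or_ge v (n + 2) with h | h
      · exact Or.inl ⟨h1, by omega⟩
      · have hv : v = n + 2 := by omega
        refine Or.inr ⟨⟨n + 1, by omega, Or.inr (by omega)⟩, ?_⟩
        rintro u ⟨hu1, hu2 | hu2⟩ <;> omega

private lemma aux_star :
    dInflStar (fun m n => 1 ≤ m ∧ (n = 0 ∨ n = m + 1)) ({1} : Set ℕ) = {0}ᶜ := by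
  ext v
  simp only [dInflStar, Set.mem_iUnion, aux_iter, Set.mem_setOf_eq,
    Set.mem_compl_iff, Set.mem_singleton_iff]
  constructor
  · rintro ⟨n, h1, _⟩; omega
  · intro h; exact ⟨v, by omega, by omega⟩

private lemma aux_hull :
    ⋂₀ {S : Set ℕ | ({1} : Set ℕ) ⊆ S ∧
        dInfl (fun m n => 1 ≤ m ∧ (n = 0 ∨ n = m + 1)) S = S} = Set.univ := by
  apply Set.eq_univ_of_forall
  intro v S hS
  simp only [Set.mem_setOf_eq] at hS
  obtain ⟨h1, h2⟩ := hS
  have hpos : ∀ n : ℕ, 1 ≤ n → n ∈ S := by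
    intro n
    induction n with
    | zero => omega
    | succ n ih =>
      intro _
      rcases Nat.lt_or_ge n 1 with h | h
      · have : n = 0 := by omega
        subst this; exact h1 rfl
      · rw [← h2]
        exact Or.inr ⟨⟨n, h, Or.inr rfl⟩, by rintro u ⟨hu1, hu2 | hu2⟩ <;> [omega; exact (by omega : u = n) ▸ ih h]⟩
  rcases Nat.lt_or_ge v 1 with h | h
  · have : v = 0 := by omega
    subst this
    rw [← h2]
    exact Or.inr ⟨⟨1, le_refl 1, Or.inl rfl⟩, fun u hu => hpos u hu.1⟩
  · exact hpos v h

theorem stmt_4 :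
    ∃ (V : Type) (E : V → V → Prop) (U : Set V),
      dInflStar E U ≠ ⋂₀ {S : Set V | U ⊆ S ∧ dInfl E S = S} ∧
      ∀ (E' : ℕ → ℕ → Prop),
        (E' = fun m n => 1 ≤ m ∧ (n = 0 ∨ n = m + 1)) →
        dInflStar E' {1} = {0}ᶜ ∧
        ⋂₀ {S : Set ℕ | {1} ⊆ S ∧ dInfl E' S = S} = Set.univ := by
  refine ⟨ℕ, fun m n => 1 ≤ m ∧ (n = 0 ∨ n = m + 1), {1}, ?_, ?_⟩
  · rw [aux_star, aux_hull]
    intro h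
    have : (0 : ℕ) ∈ ({0}ᶜ : Set ℕ) := h ▸ Set.mem_univ 0
    exact this rfl
  · rintro E' rfl
    exact ⟨aux_star, aux_hull⟩
end

section
/- If a digraph G = (V,E) is locally d⁻-finite (every vertex has finitely many inputs), then Inf^∞ U = Hull U for every U ⊆ V. -/
lemma dInfl_mono {V : Type*} (E : V → V → Prop) {S T : Set V} (h : S ⊆ T) :
    dInfl E S ⊆ dInfl E T := by
  rintro v (hv | ⟨he, ha⟩)
  · exact Or.inl (h hv)
  · exact Or.inr ⟨he, fun u hu => h (ha u hu)⟩

lemma subset_dInfl {V : Type*} (E : V → V → Prop) (S : Set V) : S ⊆ dInfl E S :=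
  Set.subset_union_left

theorem stmt_5 {V : Type*} (E : V → V → Prop)
    (hfin : ∀ v : V, {u | E u v}.Finite) (U : Set V) :
    dInflStar E U = ⋂₀ {S : Set V | U ⊆ S ∧ dInfl E S = S} := by
  apply subset_antisymm
  · intro v hv
    obtain ⟨n, hn⟩ := Set.mem_iUnion.1 hv
    intro S hS
    obtain ⟨hUS, hclosed⟩ := hS
    have key : ∀ m, (dInfl E)^[m] U ⊆ S := by
      intro m
      induction m with
      | zero => simpa
      | succ m ih =>
        rw [Function.iterate_succ_apply']
        calc dInfl E ((dInfl E)^[m] U) ⊆ dInfl E S := dInfl_mono E ih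
          _ = S := hclosed
    exact key n hn
  · intro v hv
    refine hv _ ⟨fun u hu => Set.mem_iUnion.2 ⟨0, hu⟩, ?_⟩
    apply subset_antisymm
    · rintro w (hw | ⟨⟨u0, hu0⟩, hall⟩)
      · exact hw
      · have hmono : Monotone (fun n => (dInfl E)^[n] U) := by
          apply monotone_nat_of_le_succ
          intro n
          rw [Function.iterate_succ_apply']
          exact subset_dInfl E _
        have hex : ∀ u ∈ (hfin w).toFinset, ∃ n, u ∈ (dInfl E)^[n] U := by
          intro u hu
          have h1 := hall u (by simpa using hu)
          simpa [dInflStar, Set.mem_iUnion] using h1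
        choose f hf using hex
        set N := (hfin w).toFinset.attach.sup (fun u => f u.1 u.2) with hN
        refine Set.mem_iUnion.2 ⟨N + 1, ?_⟩
        rw [Function.iterate_succ_apply']
        refine Or.inr ⟨⟨u0, hu0⟩, fun u hu => ?_⟩
        have hu' : u ∈ (hfin w).toFinset := (hfin w).mem_toFinset.2 hu
        have hle : f u hu' ≤ N := Finset.le_sup (f := fun x => f x.1 x.2) (Finset.mem_attach _ ⟨u, hu'⟩)
        exact hmono hle (hf u hu')
    · exact subset_dInfl E _
end

section
/- Let G = (V,E) be a locally d⁻-finite digraph. For any X, Y ⊆ V, Inf^∞ X ∩ Inf^∞ Y = Inf^∞[(X ∩ Inf^∞ Y) ∪ (Inf^∞ X ∩ Y)]. -/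
/-!
A vertex lying in `Inf^m X` and in `Inf^n Y` is shown to lie in `Inf^∞ Z`, for
`Z = (X ∩ Inf^∞ Y) ∪ (Inf^∞ X ∩ Y)`, by induction on `m` and then `n`: if it lies in
neither `Inf^(m-1) X` nor `Inf^(n-1) Y`, all its inputs lie in `Inf^(m-1) X ∩ Inf^(n-1) Y`,
hence in `Inf^∞ Z`, and so does the vertex because `Inf^∞ Z` is closed under `Inf`.
That closedness is where local d⁻-finiteness enters: the finitely many inputs of a vertex
all appear in one common iterate. The reverse inclusion holds because `Inf^∞ X ∩ Inf^∞ Y`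
contains `Z` and is closed under `Inf`.
-/

namespace dInfl

variable {V : Type*} (E : V → V → Prop)

theorem monotone : Monotone (dInfl E) := by
  rintro A B h v (hv | ⟨hpred, hall⟩)
  · exact Or.inl (h hv)
  · exact Or.inr ⟨hpred, fun u hu => h (hall u hu)⟩

theorem subset_self (A : Set V) : A ⊆ dInfl E A := Set.subset_union_left

theorem monotone_iterate (A : Set V) : Monotone fun n => (dInfl E)^[n] A :=
  fun _ _ hmn => Function.monotone_iterate_of_id_le (subset_self E) hmn A

theorem iterate_succ_of_preds_subset {A : Set V} {n : ℕ} {v : V} (hpred : ∃ u, E u v)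
    (hall : ∀ u, E u v → u ∈ (dInfl E)^[n] A) : v ∈ (dInfl E)^[n + 1] A := by
  rw [Function.iterate_succ_apply']
  exact Or.inr ⟨hpred, hall⟩

end dInfl

namespace dInflStar

variable {V : Type*} (E : V → V → Prop)

theorem iterate_subset (A : Set V) (n : ℕ) : (dInfl E)^[n] A ⊆ dInflStar E A :=
  Set.subset_iUnion (fun n => (dInfl E)^[n] A) n

theorem subset_self (A : Set V) : A ⊆ dInflStar E A := iterate_subset E A 0

theorem subset_of_dInfl_subset {A S : Set V} (hA : A ⊆ S) (hS : dInfl E S ⊆ S) :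
    dInflStar E A ⊆ S := by
  refine Set.iUnion_subset fun n => ?_
  induction n with
  | zero => exact hA
  | succ n ih =>
    rw [Function.iterate_succ_apply']
    exact (dInfl.monotone E ih).trans hS

theorem exists_iterate_of_finite {A s : Set V} (hs : s.Finite) (hsA : s ⊆ dInflStar E A) :
    ∃ n, s ⊆ (dInfl E)^[n] A := by
  obtain ⟨n, hn⟩ :=
    (dInfl.monotone_iterate E A).directed_le.exists_mem_subset_of_finset_subset_biUnion
      (s := hs.toFinset) (by rw [hs.coe_toFinset]; exact hsA)
  exact ⟨n, hs.coe_toFinset ▸ hn⟩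

theorem dInfl_subset (hfin : ∀ v : V, {u | E u v}.Finite) (A : Set V) :
    dInfl E (dInflStar E A) ⊆ dInflStar E A := by
  rintro v (hv | ⟨hpred, hall⟩)
  · exact hv
  · obtain ⟨n, hn⟩ := exists_iterate_of_finite E (hfin v) hall
    exact iterate_subset E A (n + 1) (dInfl.iterate_succ_of_preds_subset E hpred hn)

theorem inter_dInfl_subset (hfin : ∀ v : V, {u | E u v}.Finite) (A B : Set V) :
    dInfl E (dInflStar E A ∩ dInflStar E B) ⊆ dInflStar E A ∩ dInflStar E B :=
  ((dInfl.monotone E).map_inf_le _ _).trans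
    (Set.inter_subset_inter (dInfl_subset E hfin A) (dInfl_subset E hfin B))

theorem iterate_inter_iterate_subset (hfin : ∀ v : V, {u | E u v}.Finite) (X Y : Set V)
    (m n : ℕ) :
    (dInfl E)^[m] X ∩ (dInfl E)^[n] Y ⊆
      dInflStar E ((X ∩ dInflStar E Y) ∪ (dInflStar E X ∩ Y)) := by
  set Z := (X ∩ dInflStar E Y) ∪ (dInflStar E X ∩ Y)
  induction m generalizing n with
  | zero => exact fun v ⟨hX, hY⟩ => subset_self E Z (Or.inl ⟨hX, iterate_subset E Y n hY⟩)
  | succ m ihm =>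
    induction n with
    | zero => exact fun v ⟨hX, hY⟩ => subset_self E Z (Or.inr ⟨iterate_subset E X _ hX, hY⟩)
    | succ n ihn =>
      rintro v ⟨hX, hY⟩
      rw [Function.iterate_succ_apply'] at hX hY
      rcases hX with hX | ⟨hpred, hallX⟩
      · exact ihm (n + 1) ⟨hX, by rwa [Function.iterate_succ_apply']⟩
      rcases hY with hY | ⟨-, hallY⟩
      · exact ihn ⟨dInfl.iterate_succ_of_preds_subset E hpred hallX, hY⟩
      exact dInfl_subset E hfin Z
        (Or.inr ⟨hpred, fun u hu => ihm n ⟨hallX u hu, hallY u hu⟩⟩)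

end dInflStar

theorem stmt_6 {V : Type*} (E : V → V → Prop)
    (hfin : ∀ v : V, {u | E u v}.Finite) (X Y : Set V) :
    dInflStar E X ∩ dInflStar E Y =
      dInflStar E ((X ∩ dInflStar E Y) ∪ (dInflStar E X ∩ Y)) := by
  apply Set.Subset.antisymm
  · rintro v ⟨hX, hY⟩
    obtain ⟨m, hm⟩ := Set.mem_iUnion.mp hX
    obtain ⟨n, hn⟩ := Set.mem_iUnion.mp hY
    exact dInflStar.iterate_inter_iterate_subset E hfin X Y m n ⟨hm, hn⟩
  · refine dInflStar.subset_of_dInfl_subset E ?_ (dInflStar.inter_dInfl_subset E hfin X Y)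
    exact Set.union_subset (Set.inter_subset_inter_left _ (dInflStar.subset_self E X))
      (Set.inter_subset_inter_right _ (dInflStar.subset_self E Y))
end

section
/- Let G = (V,E) be a locally d⁻-finite digraph and X, Y ⊆ V. Then Inf^∞ X ∩ Inf^∞ Y = ∅ if and only if Inf^∞ X ∩ Y = ∅ and X ∩ Inf^∞ Y = ∅. -/
lemma mem_dInflStar_of_iter {V : Type*} (E : V → V → Prop) {U : Set V} {v : V} (n : ℕ)
    (h : v ∈ (dInfl E)^[n] U) : v ∈ dInflStar E U :=
  Set.mem_iUnion.2 ⟨n, h⟩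

theorem stmt_7 {V : Type*} (E : V → V → Prop)
    (hfin : ∀ v : V, {u | E u v}.Finite) (X Y : Set V) :
    dInflStar E X ∩ dInflStar E Y = ∅ ↔
      dInflStar E X ∩ Y = ∅ ∧ X ∩ dInflStar E Y = ∅ := by
  constructor
  · intro h
    constructor
    · apply Set.eq_empty_of_subset_empty
      rw [← h]
      exact Set.inter_subset_inter_right _ (fun v hv => mem_dInflStar_of_iter E 0 hv)
    · apply Set.eq_empty_of_subset_empty
      rw [← h]
      exact Set.inter_subset_inter_left _ (fun v hv => mem_dInflStar_of_iter E 0 hv)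
  · rintro ⟨h1, h2⟩
    have h1' : ∀ v, v ∈ dInflStar E X → v ∈ Y → False := by
      intro v hvx hvy
      exact Set.eq_empty_iff_forall_notMem.1 h1 v ⟨hvx, hvy⟩
    have h2' : ∀ v, v ∈ X → v ∈ dInflStar E Y → False := by
      intro v hvx hvy
      exact Set.eq_empty_iff_forall_notMem.1 h2 v ⟨hvx, hvy⟩
    have main : ∀ k m n, m + n = k → ∀ v, v ∈ (dInfl E)^[m] X →
        v ∈ (dInfl E)^[n] Y → False := by
      intro k
      induction k using Nat.strong_induction_on with
      | _ k ih =>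
        intro m n hk v hx hy
        match m, n with
        | 0, n =>
          exact h2' v hx (mem_dInflStar_of_iter E n hy)
        | m + 1, 0 =>
          exact h1' v (mem_dInflStar_of_iter E (m + 1) hx) hy
        | m + 1, n + 1 =>
          rw [Function.iterate_succ_apply'] at hx hy
          rcases hx with hx | ⟨⟨u0, hu0⟩, hallx⟩
          · exact ih (m + (n + 1)) (by omega) m (n + 1) rfl v hx (by rw [Function.iterate_succ_apply']; exact hy)
          · rcases hy with hy | ⟨_, hally⟩
            · exact ih (m + 1 + n) (by omega) (m + 1) n rfl v
                (by rw [Function.iterate_succ_apply']; exact Or.inr ⟨⟨u0, hu0⟩, hallx⟩) hy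
            · exact ih (m + n) (by omega) m n rfl u0 (hallx u0 hu0) (hally u0 hu0)
    apply Set.eq_empty_iff_forall_notMem.2
    rintro v ⟨hvx, hvy⟩
    obtain ⟨m, hm⟩ := Set.mem_iUnion.1 hvx
    obtain ⟨n, hn⟩ := Set.mem_iUnion.1 hvy
    exact main (m + n) m n rfl v hm hn
end

section
/- Let G = (V,E) be a digraph, U = Inf^∞{x} a region with heading x, and suppose there exists y ∈ V \ U with D⁺(y) ∩ U ≠ ∅. Then D⁺(y) ∩ U = {x}; in particular the heading of U is unique. -/
theorem stmt_10 {V : Type*} (E : V → V → Prop) (x y : V)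
    (hy : y ∉ dInflStar E {x})
    (hne : ({u | E y u} ∩ dInflStar E {x}).Nonempty) :
    {u | E y u} ∩ dInflStar E {x} = {x} := by
  have key : ∀ n : ℕ, ∀ v, v ∈ (dInfl E)^[n] ({x} : Set V) → E y v → v = x := by
    intro n
    induction n with
    | zero => intro v hv _; exact hv
    | succ n ih =>
      intro v hv hEv
      rw [Function.iterate_succ_apply'] at hv
      rcases hv with hv | hv
      · exact ih v hv hEv
      · exact absurd (Set.mem_iUnion.mpr ⟨n, hv.2 y hEv⟩) hy
  obtain ⟨w, hwE, hwU⟩ := hne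
  obtain ⟨n, hn⟩ := Set.mem_iUnion.mp hwU
  have hwx : w = x := key n w hn hwE
  subst hwx
  ext v
  constructor
  · rintro ⟨hvE, hvU⟩
    obtain ⟨m, hm⟩ := Set.mem_iUnion.mp hvU
    exact key m v hm hvE
  · rintro rfl
    exact ⟨hwE, hwU⟩
end

section
/- Every finite digraph has a unique decomposition into intervals: a unique partition of its vertex set into sets V_i, each of which is a region (of the form Inf^∞{x}) that is maximal among regions. -/
/-- An interval: a region (hyperinflation of a singleton) that is maximal among regions. -/
def IsInterval {V : Type*} (E : V → V → Prop) (A : Set V) : Prop :=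
  (∃ x : V, A = dInflStar E {x}) ∧
    ∀ y : V, A ⊆ dInflStar E {y} → A = dInflStar E {y}

/-!
A vertex `y` of a region `Inf^∞ U` generates a subregion, since `{y} ⊆ Infᵐ U` gives
`Infⁿ{y} ⊆ Inf^{n+m} U`. Two regions `Inf^∞{a}` and `Inf^∞{b}` sharing a vertex `z` are nested:
induct on `n` with `z ∈ Infⁿ{a}`; if `z = b` or `z = a` one region contains the generator of the
other, and otherwise `z` has a predecessor, which lies in both `Inf^{n-1}{a}` and `Inf^∞{b}`.
Hence intervals that meet coincide, and by finiteness `Inf^∞{x} ∋ x` lies in a maximal region.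
So the intervals partition the vertex set, and any partition into intervals must contain them all.
-/

section Regions

variable {V : Type*} (E : V → V → Prop)

lemma dInfl_mono_s11 : Monotone (dInfl E) := by
  rintro U W h v (hv | ⟨he, hall⟩)
  · exact Or.inl (h hv)
  · exact Or.inr ⟨he, fun u hu => h (hall u hu)⟩

lemma mem_dInflStar_self (x : V) : x ∈ dInflStar E {x} :=
  Set.mem_iUnion.2 ⟨0, rfl⟩

variable {E}

lemma dInflStar_singleton_subset {U : Set V} {y : V} (hy : y ∈ dInflStar E U) :
    dInflStar E {y} ⊆ dInflStar E U := by
  obtain ⟨m, hm⟩ := Set.mem_iUnion.1 hy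
  refine Set.iUnion_subset fun n => ?_
  calc (dInfl E)^[n] {y} ⊆ (dInfl E)^[n] ((dInfl E)^[m] U) :=
        (dInfl_mono_s11 E).iterate n (Set.singleton_subset_iff.2 hm)
    _ = (dInfl E)^[n + m] U := (Function.iterate_add_apply _ n m U).symm
    _ ⊆ dInflStar E U := Set.subset_iUnion (fun k => (dInfl E)^[k] U) (n + m)

lemma mem_or_forall_pred_mem_of_mem_dInflStar {U : Set V} {z : V} (hz : z ∈ dInflStar E U) :
    z ∈ U ∨ ∀ u, E u z → u ∈ dInflStar E U := by
  obtain ⟨n, hn⟩ := Set.mem_iUnion.1 hz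
  induction n with
  | zero => exact Or.inl hn
  | succ n ih =>
    rw [Function.iterate_succ_apply'] at hn
    rcases hn with hn | ⟨-, hpred⟩
    · exact ih hn
    · exact Or.inr fun u hu => Set.mem_iUnion.2 ⟨n, hpred u hu⟩

lemma dInflStar_singleton_subset_or_subset {a b z : V}
    (ha : z ∈ dInflStar E {a}) (hb : z ∈ dInflStar E {b}) :
    dInflStar E {a} ⊆ dInflStar E {b} ∨ dInflStar E {b} ⊆ dInflStar E {a} := by
  obtain ⟨n, hn⟩ := Set.mem_iUnion.1 ha
  induction n generalizing z with
  | zero =>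
    obtain rfl : z = a := hn
    exact Or.inl (dInflStar_singleton_subset hb)
  | succ n ih =>
    rw [Function.iterate_succ_apply'] at hn
    rcases hn with hn | ⟨⟨u, hu⟩, hpred_a⟩
    · exact ih (Set.mem_iUnion.2 ⟨n, hn⟩) hb hn
    rcases mem_or_forall_pred_mem_of_mem_dInflStar hb with rfl | hpred_b
    · exact Or.inr (dInflStar_singleton_subset ha)
    · exact ih (Set.mem_iUnion.2 ⟨n, hpred_a u hu⟩) (hpred_b u hu) (hpred_a u hu)

lemma isInterval_of_maximal {A : Set V} (hA : Maximal (fun B => ∃ y, B = dInflStar E {y}) A) :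
    IsInterval E A :=
  ⟨hA.prop, fun y hAy => le_antisymm hAy (hA.le_of_ge ⟨y, rfl⟩ hAy)⟩

lemma IsInterval.eq_of_mem {A B : Set V} {z : V}
    (hA : IsInterval E A) (hB : IsInterval E B) (hzA : z ∈ A) (hzB : z ∈ B) : A = B := by
  obtain ⟨⟨a, rfl⟩, hA⟩ := hA
  obtain ⟨⟨b, rfl⟩, hB⟩ := hB
  rcases dInflStar_singleton_subset_or_subset hzA hzB with h | h
  · exact hA b h
  · exact (hB a h).symm

lemma exists_isInterval_mem [Finite V] (x : V) : ∃ A, IsInterval E A ∧ x ∈ A := by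
  obtain ⟨A, hxA, hA⟩ :=
    Finite.exists_le_maximal (p := fun B => ∃ y, B = dInflStar E {y}) ⟨x, rfl⟩
  exact ⟨A, isInterval_of_maximal hA, hxA (mem_dInflStar_self E x)⟩

end Regions

theorem stmt_11 {V : Type*} [Fintype V] (E : V → V → Prop) :
    ∃! P : Set (Set V),
      (∀ A ∈ P, IsInterval E A) ∧ ⋃₀ P = Set.univ ∧
        P.PairwiseDisjoint id := by
  refine ⟨{A | IsInterval E A}, ⟨fun A hA => hA, ?_, ?_⟩, ?_⟩
  · exact Set.eq_univ_of_forall fun x => exists_isInterval_mem x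
  · exact fun A hA B hB hne =>
      Set.disjoint_left.2 fun z hzA hzB => hne (hA.eq_of_mem hB hzA hzB)
  · rintro Q ⟨hQ, hcover, -⟩
    refine Set.Subset.antisymm hQ fun A hA => ?_
    obtain ⟨a, rfl⟩ := hA.1
    obtain ⟨B, hBQ, haB⟩ := Set.mem_sUnion.1 (hcover ▸ Set.mem_univ a)
    rwa [hA.eq_of_mem (hQ B hBQ) (mem_dInflStar_self E a) haB]
end

section
/- Let G = (V,E) be an undirected graph (a symmetric digraph without loops). Then Inf^∞ U = Inf U for every subset U ⊆ V; i.e., the inflation operator is idempotent. -/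
theorem stmt_14 {V : Type*} (E : V → V → Prop)
    (hsymm : ∀ u v : V, E u v ↔ E v u) (hloop : ∀ v : V, ¬ E v v)
    (U : Set V) :
    dInflStar E U = dInfl E U := by
  have key : dInfl E (dInfl E U) = dInfl E U := by
    apply Set.Subset.antisymm
    · rintro v (hv | ⟨⟨u, hu⟩, hall⟩)
      · exact hv
      · -- every in-neighbor of v is in dInfl E U
        by_cases hvU : v ∈ dInfl E U
        · exact hvU
        · exfalso; apply hvU; right
          refine ⟨⟨u, hu⟩, fun w hw => ?_⟩
          rcases hall w hw with hwU | ⟨_, hwall⟩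
          · exact hwU
          · exact absurd (Or.inl (hwall v ((hsymm v w).mpr hw))) hvU
    · exact Set.subset_union_left
  have iter : ∀ n, (dInfl E)^[n] U ⊆ dInfl E U := by
    intro n
    induction n with
    | zero => exact Set.subset_union_left
    | succ k ih =>
      rw [Function.iterate_succ_apply']
      intro v hv
      rw [← key]
      rcases hv with h | ⟨he, hall⟩
      · exact Or.inl (ih h)
      · exact Or.inr ⟨he, fun u hu => ih (hall u hu)⟩
  apply Set.Subset.antisymm
  · exact Set.iUnion_subset iter
  · exact Set.subset_iUnion (fun n => (dInfl E)^[n] U) 1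
end

section
/- Let G = (V,E) be a finite undirected graph not containing the bowtie H (two triangles sharing one vertex) as a subgraph, let U = {v_1, …, v_l} be a path in G, and x ∈ V \ U. Then the number of vertices of U adjacent to x is at most ⌈l/2⌉ + 1. Moreover, if equality holds, then: (1) there exist consecutive vertices v_j, v_{j+1} both adjacent to x; (2) if l is even, at least one of v_1, v_l is adjacent to x; (3) if l is odd, both v_1 and v_l are adjacent to x. -/
/-- A graph is bowtie-free if it contains no two triangles sharing exactly one vertex
(as a not necessarily induced subgraph on five distinct vertices). -/
def BowtieFree {V : Type*} (G : SimpleGraph V) : Prop :=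
  ¬ ∃ a b c d e : V, [a, b, c, d, e].Pairwise (· ≠ ·) ∧
    G.Adj a b ∧ G.Adj b c ∧ G.Adj c a ∧ G.Adj a d ∧ G.Adj d e ∧ G.Adj e a


open Finset in
theorem fib_count (T : Finset ℕ) (N : ℕ) (f : ℕ → ℕ) (a : ℕ → ℕ)
    (hfN : ∀ i ∈ T, f i < N)
    (hfib : ∀ i ∈ T, i = a (f i) ∨ i = a (f i) + 1)
    (hA : ∀ m m', m < m' →
      (a m ∈ T ∧ a m + 1 ∈ T ∧ f (a m + 1) = m) →
      (a m' ∈ T ∧ a m' + 1 ∈ T ∧ f (a m' + 1) = m') → False) :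
    T.card + ((range N).filter (fun m => ¬ ∃ i ∈ T, f i = m)).card ≤ N + 1 ∧
    (N + 1 ≤ T.card → ∃ m, a m ∈ T ∧ a m + 1 ∈ T ∧ f (a m + 1) = m) := by
  classical
  set g : ℕ → ℕ := fun m => (T.filter (fun i => f i = m)).card with hg
  have hsum : T.card = ∑ m ∈ range N, g m := by
    rw [hg]
    exact Finset.card_eq_sum_card_fiberwise (fun i hi => Finset.mem_range.2 (hfN i hi))
  have hsub : ∀ m, T.filter (fun i => f i = m) ⊆ {a m, a m + 1} := by
    intro m i hi
    obtain ⟨hiT, hfi⟩ := Finset.mem_filter.1 hi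
    simp only [Finset.mem_insert, Finset.mem_singleton]
    rcases hfib i hiT with h | h
    · left; rw [h, hfi]
    · right; rw [h, hfi]
  have hg2 : ∀ m, g m ≤ 2 := by
    intro m
    refine (Finset.card_le_card (hsub m)).trans ?_
    exact (Finset.card_insert_le _ _).trans (by simp)
  have hfull : ∀ m, 2 ≤ g m → a m ∈ T ∧ a m + 1 ∈ T ∧ f (a m + 1) = m := by
    intro m hm
    have h2 : ({a m, a m + 1} : Finset ℕ).card ≤ (T.filter (fun i => f i = m)).card :=
      le_trans ((Finset.card_insert_le _ _).trans (by simp)) hm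
    have heq := Finset.eq_of_subset_of_card_le (hsub m) h2
    have h3 : a m ∈ T.filter (fun i => f i = m) := by
      rw [heq]; exact Finset.mem_insert_self _ _
    have h4 : a m + 1 ∈ T.filter (fun i => f i = m) := by
      rw [heq]; simp
    obtain ⟨h5, _⟩ := Finset.mem_filter.1 h3
    obtain ⟨h6, h7⟩ := Finset.mem_filter.1 h4
    exact ⟨h5, h6, h7⟩
  have hAcard : ((range N).filter (fun m => 2 ≤ g m)).card ≤ 1 := by
    rw [Finset.card_le_one]
    intro m hm m' hm'
    obtain ⟨_, h1⟩ := Finset.mem_filter.1 hm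
    obtain ⟨_, h2⟩ := Finset.mem_filter.1 hm'
    by_contra hne
    rcases Nat.lt_or_ge m m' with h | h
    · exact hA m m' h (hfull m h1) (hfull m' h2)
    · exact hA m' m (by omega) (hfull m' h2) (hfull m h1)
  have hzero : ∀ m, (¬ ∃ i ∈ T, f i = m) ↔ g m = 0 := by
    intro m
    rw [hg]
    simp only [Finset.card_eq_zero, Finset.filter_eq_empty_iff]
    constructor
    · intro h i hi hfi; exact h ⟨i, hi, hfi⟩
    · rintro h ⟨i, hi, hfi⟩; exact h hi hfi
  have hBA : T.card + ((range N).filter (fun m => g m = 0)).card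
      ≤ N + ((range N).filter (fun m => 2 ≤ g m)).card := by
    rw [hsum, Finset.card_filter, Finset.card_filter, ← Finset.sum_add_distrib]
    have hpt : ∀ m ∈ range N, g m + (if g m = 0 then 1 else 0)
        ≤ 1 + (if 2 ≤ g m then 1 else 0) := by
      intro m _
      have := hg2 m
      split_ifs <;> omega
    calc ∑ m ∈ range N, (g m + if g m = 0 then 1 else 0)
        ≤ ∑ m ∈ range N, (1 + if 2 ≤ g m then 1 else 0) := Finset.sum_le_sum hpt
      _ = N + ∑ m ∈ range N, (if 2 ≤ g m then 1 else 0) := by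
          rw [Finset.sum_add_distrib, Finset.sum_const, Finset.card_range, smul_eq_mul, mul_one]
  constructor
  · have : ((range N).filter (fun m => ¬ ∃ i ∈ T, f i = m))
        = ((range N).filter (fun m => g m = 0)) := by
      apply Finset.filter_congr
      intro m _
      simp only [hzero m, eq_iff_iff]
    rw [this]
    exact hBA.trans (Nat.add_le_add_left hAcard N)
  · intro hN
    by_contra hno
    push_neg at hno
    have hAempty : (range N).filter (fun m => 2 ≤ g m) = ∅ := by
      rw [Finset.filter_eq_empty_iff]
      intro m _ hm
      obtain ⟨p, q, r⟩ := hfull m hm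
      exact hno m p q r
    rw [hAempty] at hBA
    simp only [Finset.card_empty, Nat.add_zero] at hBA
    omega

theorem stmt_16 {V : Type*} [Fintype V] (G : SimpleGraph V) (hG : BowtieFree G)
    (l : ℕ) (hl : 0 < l) (v : Fin l → V) (hinj : Function.Injective v)
    (hpath : ∀ i : ℕ, ∀ h : i + 1 < l,
      G.Adj (v ⟨i, Nat.lt_of_succ_lt h⟩) (v ⟨i + 1, h⟩))
    (x : V) (hx : x ∉ Set.range v) :
    {i : Fin l | G.Adj x (v i)}.ncard ≤ (l + 1) / 2 + 1 ∧
    ({i : Fin l | G.Adj x (v i)}.ncard = (l + 1) / 2 + 1 →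
      (∃ i : ℕ, ∃ h : i + 1 < l,
        G.Adj x (v ⟨i, Nat.lt_of_succ_lt h⟩) ∧ G.Adj x (v ⟨i + 1, h⟩)) ∧
      (Even l → G.Adj x (v ⟨0, hl⟩) ∨ G.Adj x (v ⟨l - 1, Nat.sub_lt hl one_pos⟩)) ∧
      (Odd l → G.Adj x (v ⟨0, hl⟩) ∧ G.Adj x (v ⟨l - 1, Nat.sub_lt hl one_pos⟩))) := by
  classical
  have hxv : ∀ k : Fin l, x ≠ v k := fun k h => hx ⟨k, h.symm⟩
  have hvv : ∀ p q : Fin l, (p : ℕ) ≠ (q : ℕ) → v p ≠ v q :=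
    fun p q hne h => hne (congrArg Fin.val (hinj h))
  set T : Finset ℕ := (Finset.range l).filter
    (fun i => ∃ h : i < l, G.Adj x (v ⟨i, h⟩)) with hTdef
  have hTmem : ∀ i : ℕ, i ∈ T ↔ ∃ h : i < l, G.Adj x (v ⟨i, h⟩) := by
    intro i
    rw [hTdef, Finset.mem_filter, Finset.mem_range]
    constructor
    · exact fun h => h.2
    · rintro ⟨h, hadj⟩; exact ⟨h, h, hadj⟩
  have hTl : ∀ i ∈ T, i < l := by
    intro i hi; obtain ⟨h, _⟩ := (hTmem i).1 hi; exact h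
  have hK : ∀ i j : ℕ, i + 1 < j → i ∈ T → i + 1 ∈ T → j ∈ T → j + 1 ∈ T → False := by
    intro i j hij hi hi1 hj hj1
    obtain ⟨h1, a1⟩ := (hTmem i).1 hi
    obtain ⟨h2, a2⟩ := (hTmem (i+1)).1 hi1
    obtain ⟨h3, a3⟩ := (hTmem j).1 hj
    obtain ⟨h4, a4⟩ := (hTmem (j+1)).1 hj1
    apply hG
    refine ⟨x, v ⟨i, h1⟩, v ⟨i+1, h2⟩, v ⟨j, h3⟩, v ⟨j+1, h4⟩,
      ?_, a1, hpath i h2, a2.symm, a3, hpath j h4, a4.symm⟩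
    refine .cons ?_ (.cons ?_ (.cons ?_ (.cons ?_ (.cons (by simp) .nil))))
    · intro b hb
      simp only [List.mem_cons, List.not_mem_nil, or_false] at hb
      rcases hb with rfl | rfl | rfl | rfl <;> exact hxv _
    · intro b hb
      simp only [List.mem_cons, List.not_mem_nil, or_false] at hb
      rcases hb with rfl | rfl | rfl <;> · apply hvv; simp; try omega
    · intro b hb
      simp only [List.mem_cons, List.not_mem_nil, or_false] at hb
      rcases hb with rfl | rfl <;> · apply hvv; simp; try omega
    · intro b hb
      simp only [List.mem_cons, List.not_mem_nil, or_false] at hb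
      rcases hb with rfl <;> · apply hvv; simp; try omega
  have hcard : {i : Fin l | G.Adj x (v i)}.ncard = T.card := by
    have hfin : {i : Fin l | G.Adj x (v i)}.Finite := Set.toFinite _
    rw [Set.ncard_eq_toFinset_card _ hfin]
    apply Finset.card_bij (fun (i : Fin l) _ => (i : ℕ))
    · intro i hi
      rw [Set.Finite.mem_toFinset, Set.mem_setOf_eq] at hi
      exact (hTmem i).2 ⟨i.2, hi⟩
    · intro p _ q _ h
      exact Fin.val_injective h
    · intro j hj
      obtain ⟨h, hadj⟩ := (hTmem j).1 hj
      exact ⟨⟨j, h⟩, by rw [Set.Finite.mem_toFinset]; exact hadj, rfl⟩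
  have hShift := fun (Z : True) => fib_count T (l/2 + 1) (fun i => (i+1)/2) (fun m => 2*m - 1)
    (fun i hi => by have := hTl i hi; show (i+1) / 2 < l/2 + 1; omega)
    (fun i _ => by show i = 2*((i+1)/2) - 1 ∨ i = 2*((i+1)/2) - 1 + 1; omega)
    (by
      intro m m' hmm h1 h2
      have e1 : (2*m - 1 + 1 + 1) / 2 = m := h1.2.2
      have e2 : (2*m' - 1 + 1 + 1) / 2 = m' := h2.2.2
      exact hK (2*m - 1) (2*m' - 1) (by omega) h1.1 h1.2.1 h2.1 h2.2.1)
  obtain ⟨std1, std2⟩ := fib_count T ((l+1)/2) (fun i => i / 2) (fun m => 2 * m)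
    (fun i hi => by have := hTl i hi; show i / 2 < (l+1)/2; omega)
    (fun i _ => by show i = 2 * (i/2) ∨ i = 2 * (i/2) + 1; omega)
    (by
      intro m m' hmm h1 h2
      exact hK (2*m) (2*m') (by omega) h1.1 h1.2.1 h2.1 h2.2.1)
  rw [hcard]
  constructor
  · omega
  · intro heq
    refine ⟨?_, ?_, ?_⟩
    · obtain ⟨m, h1, h2, _⟩ := std2 (by omega)
      obtain ⟨hm1, am1⟩ := (hTmem _).1 h1
      obtain ⟨hm2, am2⟩ := (hTmem _).1 h2
      exact ⟨2*m, hm2, am1, am2⟩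
    · intro hev
      by_contra hcon
      push_neg at hcon
      have h0T : (0 : ℕ) ∉ T := by
        intro h
        obtain ⟨hh, ha⟩ := (hTmem 0).1 h
        exact hcon.1 ha
      have hlT : l - 1 ∉ T := by
        intro h
        obtain ⟨hh, ha⟩ := (hTmem (l-1)).1 h
        exact hcon.2 ha
      obtain ⟨k, hk⟩ := hev
      obtain ⟨sh1, _⟩ := hShift trivial
      have hB : ({0, l/2} : Finset ℕ) ⊆ (Finset.range (l/2+1)).filter
          (fun m => ¬ ∃ i ∈ T, (i+1)/2 = m) := by
        intro m hm
        simp only [Finset.mem_insert, Finset.mem_singleton] at hm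
        rw [Finset.mem_filter, Finset.mem_range]
        rcases hm with rfl | rfl
        · refine ⟨by omega, ?_⟩
          rintro ⟨i, hi, hfi⟩
          have : i = 0 := by omega
          exact h0T (this ▸ hi)
        · refine ⟨by omega, ?_⟩
          rintro ⟨i, hi, hfi⟩
          have hil := hTl i hi
          have : i = l - 1 := by omega
          exact hlT (this ▸ hi)
      have hB2 : 2 ≤ ((Finset.range (l/2+1)).filter
          (fun m => ¬ ∃ i ∈ T, (i+1)/2 = m)).card := by
        refine le_trans ?_ (Finset.card_le_card hB)
        rw [Finset.card_insert_of_notMem (by simp; omega), Finset.card_singleton]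
      omega
    · intro hodd
      obtain ⟨k, hk⟩ := hodd
      constructor
      · obtain ⟨sh1, _⟩ := hShift trivial
        have h0 : (0 : ℕ) ∈ T := by
          by_contra h0T
          have hB : (0 : ℕ) ∈ (Finset.range (l/2+1)).filter
              (fun m => ¬ ∃ i ∈ T, (i+1)/2 = m) := by
            rw [Finset.mem_filter, Finset.mem_range]
            refine ⟨by omega, ?_⟩
            rintro ⟨i, hi, hfi⟩
            have : i = 0 := by omega
            exact h0T (this ▸ hi)
          have := Finset.card_pos.2 ⟨0, hB⟩
          omega
        obtain ⟨hh, ha⟩ := (hTmem 0).1 h0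
        exact ha
      · have hl1 : l - 1 ∈ T := by
          by_contra hlT
          have hB : (l-1)/2 ∈ (Finset.range ((l+1)/2)).filter
              (fun m => ¬ ∃ i ∈ T, i/2 = m) := by
            rw [Finset.mem_filter, Finset.mem_range]
            refine ⟨by omega, ?_⟩
            rintro ⟨i, hi, hfi⟩
            have := hTl i hi
            have : i = l - 1 := by omega
            exact hlT (this ▸ hi)
          have := Finset.card_pos.2 ⟨_, hB⟩
          omega
        obtain ⟨hh, ha⟩ := (hTmem (l-1)).1 hl1
        exact ha
end

section
/- Let G = (V,E) be a bowtie-free finite undirected graph and U = {v_1, …, v_l} a premaximal path in G (i.e., it extends by one vertex to a path of maximum length in G). If x ∈ V \ U satisfies d(x,U) = ⌈l/2⌉ + 1, then every other vertex y ∈ V \ U, y ≠ x, satisfies d(y,U) ≤ ⌈l/2⌉ − 1. -/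
lemma count_set (a b : ℕ) (S : Set ℕ) (hmem : ∀ i ∈ S, a ≤ i ∧ i < b)
    (hnc : ∀ i ∈ S, i + 1 ∉ S) : S.ncard ≤ (b + 1 - a) / 2 := by
  have hS : S.ncard ≤ (Set.Iio ((b + 1 - a) / 2)).ncard := by
    apply Set.ncard_le_ncard_of_injOn (fun i => (i - a) / 2)
    · intro i hi
      have := hmem i hi
      simp only [Set.mem_Iio]
      omega
    · intro i hi j hj h
      have h1 := hmem i hi
      have h2 := hmem j hj
      have h' : (i - a) / 2 = (j - a) / 2 := h
      by_contra hne
      rcases (by omega : j = i + 1 ∨ i = j + 1) with rfl | rfl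
      · exact hnc i hi hj
      · exact hnc j hj hi
  calc S.ncard ≤ _ := hS
    _ = (b + 1 - a) / 2 := by
        rw [← Finset.coe_range, Set.ncard_coe_finset, Finset.card_range]

lemma no_ins {V : Type*} (G : SimpleGraph V) (l : ℕ) (v' : ℕ → V)
    (hinj : ∀ a b, a < l → b < l → v' a = v' b → a = b)
    (hpath : ∀ i, i + 1 < l → G.Adj (v' i) (v' (i + 1)))
    (hmax : ∀ m : ℕ, ∀ u : Fin m → V, Function.Injective u →
      (∀ i : ℕ, ∀ h : i + 1 < m,
        G.Adj (u ⟨i, Nat.lt_of_succ_lt h⟩) (u ⟨i + 1, h⟩)) → m ≤ l + 1)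
    (p : ℕ) (hp : p < l) (z e : V)
    (hz : ∀ a, a < l → v' a ≠ z) (he : ∀ a, a < l → v' a ≠ e) (hze : z ≠ e)
    (h1 : 0 < p → G.Adj (v' (p - 1)) z) (h2 : G.Adj z (v' p))
    (hle : G.Adj (v' (l - 1)) e) : False := by
  have key : ∀ a b, a < l + 2 → b < l + 2 →
      (if a < p then v' a else if a = p then z else if a ≤ l then v' (a - 1) else e) =
      (if b < p then v' b else if b = p then z else if b ≤ l then v' (b - 1) else e) →
      a = b := by
    intro a b ha hb h
    split_ifs at h
    all_goals first
      | omega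
      | (exact (by have := hinj _ _ (by omega) (by omega) h; omega))
      | (exact absurd h (hz _ (by omega)))
      | (exact absurd h (he _ (by omega)))
      | (exact absurd h.symm (hz _ (by omega)))
      | (exact absurd h.symm (he _ (by omega)))
      | (exact absurd h hze)
      | (exact absurd h.symm hze)
  have hadjf : ∀ i, i + 1 < l + 2 →
      G.Adj (if i < p then v' i else if i = p then z else if i ≤ l then v' (i - 1) else e)
        (if i + 1 < p then v' (i + 1) else if i + 1 = p then z
          else if i + 1 ≤ l then v' (i + 1 - 1) else e) := by
    intro i hi
    split_ifs with c1 c2 c3 c4 c5 c6 c7 c8 c9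
    all_goals try omega
    all_goals first
      | (exact hpath i (by omega))
      | (rw [show i = p - 1 by omega] at *; exact h1 (by omega))
      | (rw [show i + 1 - 1 = p by omega]; exact h2)
      | (rw [show i + 1 - 1 = (i - 1) + 1 by omega]; exact hpath (i - 1) (by omega))
      | (rw [show i - 1 = l - 1 by omega]; exact hle)
  have := hmax (l + 2)
    (fun i => if i.val < p then v' i.val else if i.val = p then z
      else if i.val ≤ l then v' (i.val - 1) else e)
    (fun i j hij => Fin.ext (key i.val j.val i.isLt j.isLt hij))
    (fun i h => hadjf i h)
  omega

theorem stmt_17 {V : Type*} [Fintype V] (G : SimpleGraph V) (hG : BowtieFree G)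
    (l : ℕ) (v : Fin l → V) (hinj : Function.Injective v)
    (hpath : ∀ i : ℕ, ∀ h : i + 1 < l,
      G.Adj (v ⟨i, Nat.lt_of_succ_lt h⟩) (v ⟨i + 1, h⟩))
    -- premaximal: extending by one vertex gives a path of maximum length in G
    (w : V) (hw : w ∉ Set.range v)
    (hadj : ∀ hl : 0 < l, G.Adj (v ⟨l - 1, Nat.sub_lt hl one_pos⟩) w)
    (hmax : ∀ m : ℕ, ∀ u : Fin m → V, Function.Injective u →
      (∀ i : ℕ, ∀ h : i + 1 < m,
        G.Adj (u ⟨i, Nat.lt_of_succ_lt h⟩) (u ⟨i + 1, h⟩)) → m ≤ l + 1)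
    (x : V) (hx : x ∉ Set.range v)
    (hdx : {i : Fin l | G.Adj x (v i)}.ncard = (l + 1) / 2 + 1) :
    ∀ y : V, y ∉ Set.range v → y ≠ x →
      {i : Fin l | G.Adj y (v i)}.ncard ≤ (l + 1) / 2 - 1 := by
  classical
  intro y hy hyx
  rcases Nat.eq_zero_or_pos l with hl0 | hl
  · exfalso
    subst hl0
    rw [show {i : Fin 0 | G.Adj x (v i)} = ∅ from Set.eq_empty_of_isEmpty _,
      Set.ncard_empty] at hdx
    omega
  set v' : ℕ → V := fun i => if h : i < l then v ⟨i, h⟩ else x with hv'def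
  have hv' : ∀ (j : ℕ) (h : j < l), v' j = v ⟨j, h⟩ := fun j h => dif_pos h
  have hinj' : ∀ a b, a < l → b < l → v' a = v' b → a = b := by
    intro a b ha hb h
    rw [hv' a ha, hv' b hb] at h
    simpa using congrArg Fin.val (hinj h)
  have hpath' : ∀ i, i + 1 < l → G.Adj (v' i) (v' (i + 1)) := by
    intro i h
    rw [hv' i (by omega), hv' (i + 1) h]
    exact hpath i h
  have hnot : ∀ zz : V, zz ∉ Set.range v → ∀ a, a < l → v' a ≠ zz := by
    intro zz hzz a ha hEq
    exact hzz ⟨⟨a, ha⟩, by rw [← hv' a ha]; exact hEq⟩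
  have hwl : G.Adj (v' (l - 1)) w := by
    rw [hv' (l - 1) (by omega)]; exact hadj hl
  have htrans : ∀ z : V, (Fin.val '' {i : Fin l | G.Adj z (v i)}).ncard =
      {i : Fin l | G.Adj z (v i)}.ncard :=
    fun z => Set.ncard_image_of_injective _ Fin.val_injective
  have hmem' : ∀ z : V, ∀ i : ℕ, i ∈ Fin.val '' {j : Fin l | G.Adj z (v j)} ↔
      ∃ _ : i < l, G.Adj z (v' i) := by
    intro z i
    constructor
    · rintro ⟨j, hj, rfl⟩
      refine ⟨j.isLt, ?_⟩
      rw [hv' j.val j.isLt]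
      simpa using hj
    · rintro ⟨h, hA⟩
      refine ⟨⟨i, h⟩, ?_, rfl⟩
      rw [hv' i h] at hA
      exact hA
  by_cases hxw : x = w
  · subst hxw
    by_cases hyl : G.Adj y (v' (l - 1))
    · exfalso
      -- bound the degree of x (= w) using the path v₀ … v_{l-1} y
      have h0 : ¬ G.Adj x (v' 0) := fun hc =>
        no_ins G l v' hinj' hpath' hmax 0 hl x y (hnot x hx) (hnot y hy)
          (Ne.symm hyx) (by omega) hc hyl.symm
      have hnc : ∀ i ∈ Fin.val '' {j : Fin l | G.Adj x (v j)},
          i + 1 ∉ Fin.val '' {j : Fin l | G.Adj x (v j)} := by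
        intro i hi hi1
        obtain ⟨hil, hA⟩ := (hmem' x i).1 hi
        obtain ⟨hil1, hA1⟩ := (hmem' x (i + 1)).1 hi1
        exact no_ins G l v' hinj' hpath' hmax (i + 1) hil1 x y (hnot x hx)
          (hnot y hy) (Ne.symm hyx) (fun _ => by simpa using hA.symm) hA1 hyl.symm
      have hb := count_set 1 l (Fin.val '' {j : Fin l | G.Adj x (v j)})
        (fun i hi => by
          obtain ⟨hil, hA⟩ := (hmem' x i).1 hi
          refine ⟨?_, hil⟩
          rcases Nat.eq_zero_or_pos i with rfl | h1
          · exact absurd hA h0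
          · omega) hnc
      rw [htrans x, hdx] at hb
      omega
    · -- bound the degree of y
      have h0 : ¬ G.Adj y (v' 0) := fun hc =>
        no_ins G l v' hinj' hpath' hmax 0 hl y x (hnot y hy) (hnot x hx)
          hyx (by omega) hc hwl
      have hnc : ∀ i ∈ Fin.val '' {j : Fin l | G.Adj y (v j)},
          i + 1 ∉ Fin.val '' {j : Fin l | G.Adj y (v j)} := by
        intro i hi hi1
        obtain ⟨hil, hA⟩ := (hmem' y i).1 hi
        obtain ⟨hil1, hA1⟩ := (hmem' y (i + 1)).1 hi1
        exact no_ins G l v' hinj' hpath' hmax (i + 1) hil1 y x (hnot y hy)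
          (hnot x hx) hyx (fun _ => by simpa using hA.symm) hA1 hwl
      have hb := count_set 1 (l - 1) (Fin.val '' {j : Fin l | G.Adj y (v j)})
        (fun i hi => by
          obtain ⟨hil, hA⟩ := (hmem' y i).1 hi
          constructor
          · rcases Nat.eq_zero_or_pos i with rfl | h1
            · exact absurd hA h0
            · omega
          · rcases Nat.lt_or_ge i (l - 1) with h2 | h2
            · exact h2
            · exact absurd (by rwa [show i = l - 1 by omega] at hA) hyl) hnc
      rw [htrans y] at hb
      omega
  · -- x ≠ w : the degree hypothesis on x is contradictory
    exfalso
    have hnc : ∀ i ∈ Fin.val '' {j : Fin l | G.Adj x (v j)},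
        i + 1 ∉ Fin.val '' {j : Fin l | G.Adj x (v j)} := by
      intro i hi hi1
      obtain ⟨hil, hA⟩ := (hmem' x i).1 hi
      obtain ⟨hil1, hA1⟩ := (hmem' x (i + 1)).1 hi1
      exact no_ins G l v' hinj' hpath' hmax (i + 1) hil1 x w (hnot x hx)
        (hnot w hw) hxw (fun _ => by simpa using hA.symm) hA1 hwl
    have hb := count_set 0 l (Fin.val '' {j : Fin l | G.Adj x (v j)})
      (fun i hi => ⟨Nat.zero_le i, ((hmem' x i).1 hi).1⟩) hnc
    rw [htrans x, hdx] at hb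
    omega
end

section
/- For every integer p > 4, the Turán number of the bowtie H (two triangles sharing a vertex) is ex(p, H) = ⌊p²/4⌋ + 1: every bowtie-free simple graph on p vertices has at most ⌊p²/4⌋ + 1 edges, and this bound is attained (e.g., by the complete bipartite graph K_{⌊p/2⌋,⌈p/2⌉} with one extra edge added inside a part). -/
open Finset SimpleGraph

def Bt {V : Type*} (G : SimpleGraph V) : Prop :=
  ∃ a b c d e : V, [a, b, c, d, e].Pairwise (· ≠ ·) ∧
    G.Adj a b ∧ G.Adj b c ∧ G.Adj c a ∧ G.Adj a d ∧ G.Adj d e ∧ G.Adj e a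

lemma pairwise_five {V : Type*} {x p q r s : V}
    (h1 : x ≠ p) (h2 : x ≠ q) (h3 : x ≠ r) (h4 : x ≠ s) (h5 : p ≠ q) (h6 : p ≠ r)
    (h7 : p ≠ s) (h8 : q ≠ r) (h9 : q ≠ s) (h10 : r ≠ s) :
    [x, p, q, r, s].Pairwise (· ≠ ·) := by
  refine List.Pairwise.cons ?_ (List.Pairwise.cons ?_ (List.Pairwise.cons ?_
    (List.Pairwise.cons ?_ (List.pairwise_singleton _ _)))) <;>
  · intro z hz
    simp only [List.mem_cons, List.mem_singleton, List.not_mem_nil, or_false] at hz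
    rcases hz with rfl | rfl | rfl | rfl <;> assumption

lemma nsymm {α : Sort*} {a b : α} (h : ¬a = b) : b ≠ a := fun hh => h hh.symm

lemma bt_mk {V : Type*} {G : SimpleGraph V} {x p q r s : V}
    (hxp : G.Adj x p) (hpq : G.Adj p q) (hqx : G.Adj q x)
    (hxr : G.Adj x r) (hrs : G.Adj r s) (hsx : G.Adj s x)
    (hpr : p ≠ r) (hps : p ≠ s) (hqr : q ≠ r) (hqs : q ≠ s) : Bt G :=
  ⟨x, p, q, r, s, pairwise_five hxp.ne hqx.ne' hxr.ne hsx.ne' hpq.ne hpr hps hqr hqs hrs.ne,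
    hxp, hpq, hqx, hxr, hrs, hsx⟩

section Seven
variable {G : SimpleGraph (Fin 7)} [DecidableRel G.Adj]

lemma common (hreg : ∀ v, G.degree v = 4) (x y : Fin 7) : ∃ z, G.Adj x z ∧ G.Adj y z := by
  have hx : #(G.neighborFinset x) = 4 := by
    rw [card_neighborFinset_eq_degree]; exact hreg x
  have hy : #(G.neighborFinset y) = 4 := by
    rw [card_neighborFinset_eq_degree]; exact hreg y
  have hcup : #(G.neighborFinset x ∪ G.neighborFinset y) ≤ 7 :=
    le_trans (card_le_univ _) (by simp)
  have hiu := Finset.card_inter_add_card_union (G.neighborFinset x) (G.neighborFinset y)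
  have hne : (G.neighborFinset x ∩ G.neighborFinset y).Nonempty := card_pos.1 (by omega)
  obtain ⟨z, hz⟩ := hne
  simp only [mem_inter, mem_neighborFinset] at hz
  exact ⟨z, hz.1, hz.2⟩

lemma quad (hreg : ∀ v, G.degree v = 4) {x a b c d : Fin 7}
    (ha : G.Adj x a) (hb : G.Adj x b) (hc : G.Adj x c) (hd : G.Adj x d)
    (hab : a ≠ b) (hac : a ≠ c) (had : a ≠ d) (hbc : b ≠ c) (hbd : b ≠ d) (hcd : c ≠ d) :
    G.neighborFinset x = {a, b, c, d} := by
  refine (Finset.eq_of_subset_of_card_le ?_ ?_).symm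
  · intro z hz
    simp only [mem_insert, mem_singleton] at hz
    rw [mem_neighborFinset]
    rcases hz with rfl | rfl | rfl | rfl <;> assumption
  · rw [card_neighborFinset_eq_degree, hreg]
    rw [card_insert_of_notMem (by simp [hab, hac, had]),
      card_insert_of_notMem (by simp [hbc, hbd]),
      card_insert_of_notMem (by simp [hcd]), card_singleton]

lemma five_le (hreg : ∀ v, G.degree v = 4) {t a b c d e : Fin 7}
    (ha : G.Adj t a) (hb : G.Adj t b) (hc : G.Adj t c) (hd : G.Adj t d) (he : G.Adj t e)
    (hab : a ≠ b) (hac : a ≠ c) (had : a ≠ d) (hae : a ≠ e) (hbc : b ≠ c) (hbd : b ≠ d)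
    (hbe : b ≠ e) (hcd : c ≠ d) (hce : c ≠ e) (hde : d ≠ e) : False := by
  have hsub : ({a, b, c, d, e} : Finset (Fin 7)) ⊆ G.neighborFinset t := by
    intro z hz
    simp only [mem_insert, mem_singleton] at hz
    rw [mem_neighborFinset]
    rcases hz with rfl | rfl | rfl | rfl | rfl <;> assumption
  have hcard : #({a, b, c, d, e} : Finset (Fin 7)) = 5 := by
    rw [card_insert_of_notMem (by simp [hab, hac, had, hae]),
      card_insert_of_notMem (by simp [hbc, hbd, hbe]),
      card_insert_of_notMem (by simp [hcd, hce]),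
      card_insert_of_notMem (by simp [hde]), card_singleton]
  have := card_le_card hsub
  rw [hcard, card_neighborFinset_eq_degree, hreg] at this
  omega

lemma seven_aux (hreg : ∀ v, G.degree v = 4) (u t2 t3 x : Fin 7)
    (h23 : G.Adj t2 t3) (hu2 : G.Adj u t2) (hu3 : G.Adj u t3)
    (hxu : G.Adj x u) (hx2 : G.Adj x t2) (hx3ne : x ≠ t3) : Bt G := by
  by_cases hx3 : G.Adj x t3
  · -- x adjacent to u, t2, t3; fourth neighbor y
    have hcard : #(G.neighborFinset x \ {u, t2, t3}) = 1 := by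
      rw [card_sdiff_of_subset]
      · rw [card_neighborFinset_eq_degree, hreg,
          card_insert_of_notMem (by simp [hu2.ne, hu3.ne]),
          card_insert_of_notMem (by simp [h23.ne]), card_singleton]
      · intro z hz
        simp only [mem_insert, mem_singleton] at hz
        rw [mem_neighborFinset]
        rcases hz with rfl | rfl | rfl
        · exact hxu
        · exact hx2
        · exact hx3
    obtain ⟨y, hy⟩ := card_eq_one.1 hcard
    have hymem : y ∈ G.neighborFinset x \ {u, t2, t3} := by rw [hy]; exact mem_singleton_self y
    simp only [mem_sdiff, mem_neighborFinset, mem_insert, mem_singleton, not_or] at hymem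
    obtain ⟨hxy, hyu, hy2, hy3⟩ := hymem
    obtain ⟨z, hxz, hyz⟩ := common hreg x y
    have hzmem : z ∈ G.neighborFinset x := by rw [mem_neighborFinset]; exact hxz
    rw [quad hreg hxu hx2 hx3 hxy hu2.ne hu3.ne (Ne.symm hyu) h23.ne (Ne.symm hy2)
      (Ne.symm hy3)] at hzmem
    simp only [mem_insert, mem_singleton] at hzmem
    have hzy : z ≠ y := fun h => (G.ne_of_adj hyz) (h ▸ rfl)
    rcases hzmem with h | h | h | h
    · -- z = u : triangles x-y-u and x-t2-t3
      have hyu2 : G.Adj y u := h ▸ hyz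
      exact bt_mk hxy hyu2 hxu.symm hx2 h23 hx3.symm hy2 hy3 hu2.ne hu3.ne
    · -- z = t2 : triangles x-y-t2 and x-t3-u
      have hyt2 : G.Adj y t2 := h ▸ hyz
      exact bt_mk hxy hyt2 hx2.symm hx3 hu3.symm hxu.symm hy3 hyu h23.ne hu2.ne'
    · -- z = t3 : triangles x-y-t3 and x-t2-u
      have hyt3 : G.Adj y t3 := h ▸ hyz
      exact bt_mk hxy hyt3 hx3.symm hx2 hu2.symm hxu.symm hy2 hyu h23.ne' hu3.ne'
    · exact absurd h hzy
  · -- x not adjacent t3 ; two more neighbors y1 y2 besides u, t2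
    have hcard : #(G.neighborFinset x \ {u, t2}) = 2 := by
      rw [card_sdiff_of_subset]
      · rw [card_neighborFinset_eq_degree, hreg,
          card_insert_of_notMem (by simp [hu2.ne]), card_singleton]
      · intro z hz
        simp only [mem_insert, mem_singleton] at hz
        rw [mem_neighborFinset]
        rcases hz with rfl | rfl
        · exact hxu
        · exact hx2
    obtain ⟨y1, y2, hy12, hy⟩ := card_eq_two.1 hcard
    have hymem : ∀ w ∈ ({y1, y2} : Finset (Fin 7)), w ∈ G.neighborFinset x \ {u, t2} := by
      rw [← hy]; exact fun w hw => hw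
    have h1 := hymem y1 (by simp)
    have h2 := hymem y2 (by simp)
    simp only [mem_sdiff, mem_neighborFinset, mem_insert, mem_singleton, not_or] at h1 h2
    obtain ⟨hxy1, hy1u, hy1t2⟩ := h1
    obtain ⟨hxy2, hy2u, hy2t2⟩ := h2
    have hy1t3 : y1 ≠ t3 := fun h => hx3 (h ▸ hxy1)
    have hy2t3 : y2 ≠ t3 := fun h => hx3 (h ▸ hxy2)
    by_cases hyy : G.Adj y1 y2
    · -- triangles x-u-t2 and x-y1-y2
      exact bt_mk hxu hu2 hx2.symm hxy1 hyy hxy2.symm (nsymm hy1u) (nsymm hy2u)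
        (nsymm hy1t2) (nsymm hy2t2)
    · have hNx : G.neighborFinset x = {u, t2, y1, y2} :=
        quad hreg hxu hx2 hxy1 hxy2 hu2.ne (Ne.symm hy1u) (Ne.symm hy2u) (Ne.symm hy1t2)
          (Ne.symm hy2t2) hy12
      obtain ⟨z3, hxz3, hy1z3⟩ := common hreg x y1
      obtain ⟨z4, hxz4, hy2z4⟩ := common hreg x y2
      have hz3mem : z3 ∈ G.neighborFinset x := by rw [mem_neighborFinset]; exact hxz3
      have hz4mem : z4 ∈ G.neighborFinset x := by rw [mem_neighborFinset]; exact hxz4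
      rw [hNx] at hz3mem hz4mem
      simp only [mem_insert, mem_singleton] at hz3mem hz4mem
      have hz3y1 : z3 ≠ y1 := (G.ne_of_adj hy1z3).symm
      have hz3y2 : z3 ≠ y2 := fun h => hyy (h ▸ hy1z3)
      have hz4y2 : z4 ≠ y2 := (G.ne_of_adj hy2z4).symm
      have hz4y1 : z4 ≠ y1 := fun h => hyy (h ▸ hy2z4).symm
      have hz3' : z3 = u ∨ z3 = t2 := by rcases hz3mem with h|h|h|h <;> tauto
      have hz4' : z4 = u ∨ z4 = t2 := by rcases hz4mem with h|h|h|h <;> tauto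
      by_cases hzz : z3 = z4
      · -- common vertex t := z3 = z4 has ≥ 5 neighbors
        subst hzz
        rcases hz3' with rfl | rfl
        · -- t = u : neighbors x, y1, y2, t2, t3
          exact absurd (five_le hreg hxu.symm hy1z3.symm hy2z4.symm hu2 hu3
            hxy1.ne hxy2.ne hx2.ne hx3ne hy12
            hy1t2 hy1t3 hy2t2 hy2t3 h23.ne) not_false
        · -- t = t2 : neighbors x, y1, y2, u, t3
          exact absurd (five_le hreg hx2.symm hy1z3.symm hy2z4.symm hu2.symm h23
            hxy1.ne hxy2.ne hxu.ne hx3ne hy12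
            hy1u hy1t3 hy2u hy2t3 hu3.ne) not_false
      · -- bowtie x-y1-z3 / x-y2-z4
        exact bt_mk hxy1 hy1z3 hxz3.symm hxy2 hy2z4 hxz4.symm hy12
          (fun h => hz4y1 h.symm) hz3y2 hzz

lemma seven (hreg : ∀ v, G.degree v = 4) : Bt G := by
  have hN0 : (G.neighborFinset 0).Nonempty := by
    rw [← card_pos, card_neighborFinset_eq_degree, hreg]; omega
  obtain ⟨v, hv⟩ := hN0
  rw [mem_neighborFinset] at hv
  obtain ⟨w, h0w, hvw⟩ := common hreg 0 v
  -- triangle 0 v w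
  have hvwne : v ≠ w := G.ne_of_adj hvw
  have hcard : #(G.neighborFinset 0 \ {v, w}) = 2 := by
    rw [card_sdiff_of_subset]
    · rw [card_neighborFinset_eq_degree, hreg,
        card_insert_of_notMem (by simp [hvwne]), card_singleton]
    · intro z hz
      simp only [mem_insert, mem_singleton] at hz
      rw [mem_neighborFinset]
      rcases hz with rfl | rfl
      · exact hv
      · exact h0w
  obtain ⟨a1, a2, ha12, ha⟩ := card_eq_two.1 hcard
  have hamem : ∀ w' ∈ ({a1, a2} : Finset (Fin 7)), w' ∈ G.neighborFinset 0 \ {v, w} := by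
    rw [← ha]; exact fun w' hw' => hw'
  have h1 := hamem a1 (by simp)
  have h2 := hamem a2 (by simp)
  simp only [mem_sdiff, mem_neighborFinset, mem_insert, mem_singleton, not_or] at h1 h2
  obtain ⟨h0a1, ha1v, ha1w⟩ := h1
  obtain ⟨h0a2, ha2v, ha2w⟩ := h2
  obtain ⟨z, h0z, ha1z⟩ := common hreg 0 a1
  have hzmem : z ∈ G.neighborFinset 0 := by rw [mem_neighborFinset]; exact h0z
  rw [quad hreg hv h0w h0a1 h0a2 hvwne (Ne.symm ha1v) (Ne.symm ha2v) (Ne.symm ha1w)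
    (Ne.symm ha2w) ha12] at hzmem
  simp only [mem_insert, mem_singleton] at hzmem
  have hza1 : z ≠ a1 := (G.ne_of_adj ha1z).symm
  rcases hzmem with h | h | h | h
  · -- z = v : x := a1 adjacent to 0 and v; triangle 0 v w
    have ha1v2 : G.Adj a1 v := h ▸ ha1z
    exact seven_aux hreg 0 v w a1 hvw hv h0w h0a1.symm ha1v2 ha1w
  · -- z = w
    have ha1w2 : G.Adj a1 w := h ▸ ha1z
    exact seven_aux hreg 0 w v a1 hvw.symm h0w hv h0a1.symm ha1w2 ha1v
  · exact absurd h hza1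
  · -- z = a2 : bowtie 0: triangle 0 v w and 0 a1 a2
    have ha1a2 : G.Adj a1 a2 := h ▸ ha1z
    have h0a2' : G.Adj 0 a2 := h ▸ h0z
    exact bt_mk hv hvw h0w.symm h0a1 ha1a2 h0a2'.symm (nsymm ha1v) (nsymm ha2v)
      (nsymm ha1w) (nsymm ha2w)
end Seven

def enc : ℕ → (ℕ → Bool) → ℕ
  | 0, _ => 0
  | n+1, f => (cond (f 0) 1 0) + 2 * enc n (fun i => f (i+1))

lemma enc_lt : ∀ (n : ℕ) (f : ℕ → Bool), enc n f < 2 ^ n := by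
  intro n
  induction n with
  | zero => intro f; simp [enc]
  | succ n ih =>
    intro f
    have h1 := ih (fun i => f (i+1))
    have h2 : (cond (f 0) 1 0) ≤ 1 := by cases f 0 <;> simp
    simp only [enc, pow_succ]
    omega

lemma testBit_enc : ∀ (n : ℕ) (f : ℕ → Bool) (j : ℕ), j < n → (enc n f).testBit j = f j := by
  intro n
  induction n with
  | zero => intro f j hj; omega
  | succ n ih =>
    intro f j hj
    match j with
    | 0 =>
      rw [Nat.testBit_zero]
      cases hf : f 0 <;> simp [enc, hf, Nat.add_mul_mod_self_left]
    | j+1 =>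
      rw [Nat.testBit_add_one]
      have hdiv : (cond (f 0) 1 0 + 2 * enc n (fun i => f (i+1))) / 2
          = enc n (fun i => f (i+1)) := by cases f 0 <;> simp <;> omega
      have h2 : enc (n+1) f / 2 = enc n (fun i => f (i+1)) := hdiv
      rw [h2, ih (fun i => f (i+1)) j (by omega)]

def pf : Fin 10 → Fin 5 × Fin 5 :=
  ![(0,1),(0,2),(0,3),(0,4),(1,2),(1,3),(1,4),(2,3),(2,4),(3,4)]

def adjB (m : ℕ) (a b : Fin 5) : Prop :=
  ∃ k : Fin 10, m.testBit k = true ∧ (pf k = (a,b) ∨ pf k = (b,a))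

instance (m : ℕ) (a b : Fin 5) : Decidable (adjB m a b) := by
  unfold adjB; infer_instance

def P5 (m : ℕ) : Prop := 8 ≤ #(univ.filter fun k : Fin 10 => m.testBit k = true) →
    ∃ a b c d e : Fin 5, [a,b,c,d,e].Pairwise (· ≠ ·) ∧
      adjB m a b ∧ adjB m b c ∧ adjB m c a ∧ adjB m a d ∧ adjB m d e ∧ adjB m e a

instance (m : ℕ) : Decidable (P5 m) := by unfold P5; infer_instance

set_option maxRecDepth 20000 in
set_option maxHeartbeats 12000000 in
lemma chunk0 : ∀ m ∈ Finset.range 256, P5 m := by decide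

set_option maxRecDepth 20000 in
set_option maxHeartbeats 12000000 in
lemma chunk1 : ∀ m ∈ Finset.range 256, P5 (m + 256) := by decide

set_option maxRecDepth 20000 in
set_option maxHeartbeats 12000000 in
lemma chunk2 : ∀ m ∈ Finset.range 256, P5 (m + 512) := by decide

set_option maxRecDepth 20000 in
set_option maxHeartbeats 12000000 in
lemma chunk3 : ∀ m ∈ Finset.range 256, P5 (m + 768) := by decide

lemma base5core : ∀ m : ℕ, m < 1024 → P5 m := by
  intro m hm
  rcases Nat.lt_or_ge m 256 with h | h
  · exact chunk0 m (mem_range.2 h)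
  rcases Nat.lt_or_ge m 512 with h2 | h2
  · obtain ⟨r, rfl⟩ : ∃ r, m = r + 256 := ⟨m - 256, by omega⟩
    exact chunk1 r (mem_range.2 (by omega))
  rcases Nat.lt_or_ge m 768 with h3 | h3
  · obtain ⟨r, rfl⟩ : ∃ r, m = r + 512 := ⟨m - 512, by omega⟩
    exact chunk2 r (mem_range.2 (by omega))
  · obtain ⟨r, rfl⟩ : ∃ r, m = r + 768 := ⟨m - 768, by omega⟩
    exact chunk3 r (mem_range.2 (by omega))

lemma base5 (G : SimpleGraph (Fin 5)) [DecidableRel G.Adj] (h : 8 ≤ #G.edgeFinset) : Bt G := by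
  set f : ℕ → Bool :=
    fun k => if h : k < 10 then decide (G.Adj (pf ⟨k, h⟩).1 (pf ⟨k, h⟩).2) else false with hf
  set m : ℕ := enc 10 f with hmdef
  have htb : ∀ k : Fin 10, m.testBit k = true ↔ G.Adj (pf k).1 (pf k).2 := by
    intro k
    rw [hmdef, testBit_enc 10 f k k.isLt, hf]
    simp only [Fin.is_lt, dif_pos, Fin.eta, decide_eq_true_eq]
  have cover : ∀ a b : Fin 5, a ≠ b → ∃ k : Fin 10, pf k = (a,b) ∨ pf k = (b,a) := by decide
  have hsub : G.edgeFinset ⊆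
      (univ.filter fun k : Fin 10 => m.testBit k = true).image
        (fun k => s((pf k).1, (pf k).2)) := by
    intro e he
    rw [mem_edgeFinset] at he
    induction e with
    | _ a b =>
      rw [mem_edgeSet] at he
      obtain ⟨k, hk⟩ := cover a b he.ne
      refine mem_image.2 ⟨k, mem_filter.2 ⟨mem_univ _, (htb k).2 ?_⟩, ?_⟩
      · rcases hk with hk | hk <;> rw [hk]
        · exact he
        · exact he.symm
      · rcases hk with hk | hk <;> rw [hk] <;> first | rfl | exact Sym2.eq_swap
  have hcount : 8 ≤ #(univ.filter fun k : Fin 10 => m.testBit k = true) :=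
    le_trans h (le_trans (card_le_card hsub) card_image_le)
  have hP := base5core m (by
    have := enc_lt 10 f
    rw [hmdef]; norm_num at this ⊢; exact this) hcount
  have hconv : ∀ a b : Fin 5, adjB m a b → G.Adj a b := by
    rintro a b ⟨k, hk, hcase⟩
    have hadj := (htb k).1 hk
    rcases hcase with hh | hh
    · rw [hh] at hadj; exact hadj
    · rw [hh] at hadj; exact hadj.symm
  obtain ⟨a, b, c, d, e, hpw, h1, h2, h3, h4, h5, h6⟩ := hP
  exact ⟨a, b, c, d, e, hpw, hconv _ _ h1, hconv _ _ h2, hconv _ _ h3, hconv _ _ h4,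
    hconv _ _ h5, hconv _ _ h6⟩

variable {n : ℕ}

lemma img_nbr (G : SimpleGraph (Fin (n+1))) [DecidableRel G.Adj] (v : Fin (n+1)) (i : Fin n) :
    ((G.comap v.succAbove).neighborFinset i).image v.succAbove
      = G.neighborFinset (v.succAbove i) \ {v} := by
  ext w
  simp only [mem_image, mem_neighborFinset, comap_adj, mem_sdiff, mem_singleton]
  constructor
  · rintro ⟨j, hj, rfl⟩
    exact ⟨hj, Fin.succAbove_ne v j⟩
  · rintro ⟨hw, hne⟩
    obtain ⟨j, rfl⟩ := Fin.exists_succAbove_eq hne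
    exact ⟨j, hw, rfl⟩

lemma deg_del (G : SimpleGraph (Fin (n+1))) [DecidableRel G.Adj] (v : Fin (n+1)) (i : Fin n) :
    (G.comap v.succAbove).degree i + (if G.Adj v (v.succAbove i) then 1 else 0)
      = G.degree (v.succAbove i) := by
  have h1 : (G.comap v.succAbove).degree i = #(G.neighborFinset (v.succAbove i) \ {v}) := by
    rw [← card_neighborFinset_eq_degree, ← img_nbr G v i,
      card_image_of_injective _ (Fin.succAbove_right_injective)]
  rw [h1, ← card_neighborFinset_eq_degree]
  by_cases hv : G.Adj v (v.succAbove i)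
  · have hvmem : v ∈ G.neighborFinset (v.succAbove i) := by
      rw [mem_neighborFinset]; exact hv.symm
    rw [if_pos hv, card_sdiff_of_subset (by simpa using hvmem), card_singleton]
    have : 1 ≤ #(G.neighborFinset (v.succAbove i)) := card_pos.2 ⟨v, hvmem⟩
    omega
  · have hvmem : v ∉ G.neighborFinset (v.succAbove i) := by
      rw [mem_neighborFinset]; exact fun h => hv h.symm
    rw [if_neg hv, sdiff_eq_self_of_disjoint (by simpa using hvmem), add_zero]

lemma cnt_del (G : SimpleGraph (Fin (n+1))) [DecidableRel G.Adj] (v : Fin (n+1)) :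
    #(univ.filter fun i : Fin n => G.Adj v (v.succAbove i)) = G.degree v := by
  rw [← card_neighborFinset_eq_degree]
  rw [← card_image_of_injective (univ.filter fun i : Fin n => G.Adj v (v.succAbove i))
    (Fin.succAbove_right_injective (p := v))]
  congr 1
  ext w
  simp only [mem_image, mem_filter, mem_univ, true_and, mem_neighborFinset]
  constructor
  · rintro ⟨j, hj, rfl⟩; exact hj
  · intro hw
    obtain ⟨j, rfl⟩ := Fin.exists_succAbove_eq (G.ne_of_adj hw).symm
    exact ⟨j, hw, rfl⟩

lemma card_del (G : SimpleGraph (Fin (n+1))) [DecidableRel G.Adj] (v : Fin (n+1)) :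
    #G.edgeFinset = #(G.comap v.succAbove).edgeFinset + G.degree v := by
  have hsum := Fin.sum_univ_succAbove (fun u => G.degree u) v
  have h2 : ∑ u, G.degree u = 2 * #G.edgeFinset := G.sum_degrees_eq_twice_card_edges
  have h3 : ∑ i, (G.comap v.succAbove).degree i
      = 2 * #(G.comap v.succAbove).edgeFinset :=
    (G.comap v.succAbove).sum_degrees_eq_twice_card_edges
  have h4 : ∑ i : Fin n, G.degree (v.succAbove i)
      = ∑ i : Fin n, ((G.comap v.succAbove).degree i
          + (if G.Adj v (v.succAbove i) then 1 else 0)) := by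
    exact Finset.sum_congr rfl fun i _ => (deg_del G v i).symm
  rw [Finset.sum_add_distrib] at h4
  have h5 : ∑ i : Fin n, (if G.Adj v (v.succAbove i) then 1 else 0)
      = #(univ.filter fun i : Fin n => G.Adj v (v.succAbove i)) := by
    simp [Finset.sum_boole]
  rw [h5, cnt_del] at h4
  omega

instance cdecid {n m : ℕ} (G : SimpleGraph (Fin m)) [DecidableRel G.Adj] (f : Fin n → Fin m) :
    DecidableRel (G.comap f).Adj := fun a b => ‹DecidableRel G.Adj› (f a) (f b)

lemma bt_del {n : ℕ} (G : SimpleGraph (Fin (n+1))) (v : Fin (n+1))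
    (h : Bt (G.comap v.succAbove)) : Bt G := by
  obtain ⟨a, b, c, d, e, hpw, h1, h2, h3, h4, h5, h6⟩ := h
  refine ⟨v.succAbove a, v.succAbove b, v.succAbove c, v.succAbove d, v.succAbove e,
    ?_, h1, h2, h3, h4, h5, h6⟩
  exact hpw.map v.succAbove fun x y hxy => fun hc =>
    hxy (Fin.succAbove_right_injective hc)

lemma arith_main (k e : ℕ) (h1 : (k+6)^2/4 + 2 ≤ e)
    (h2 : (k+6) * e ≤ 2 * e + (k+6) * ((k+5)^2/4 + 1)) : k = 1 ∧ e = 14 := by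
  obtain ⟨j, hj⟩ : ∃ j, k = 2*j ∨ k = 2*j+1 := ⟨k/2, by omega⟩
  rcases hj with rfl | rfl
  · -- even k : contradiction
    exfalso
    have e1 : (2*j+6)^2 = 4*(j^2+6*j+9) := by ring
    have e2 : (2*j+5)^2 = 4*(j^2+5*j+6) + 1 := by ring
    rw [e1, Nat.mul_div_cancel_left _ (by norm_num : (0:ℕ) < 4)] at h1
    rw [e2] at h2
    have e3 : (4*(j^2+5*j+6) + 1)/4 = j^2+5*j+6 := by omega
    rw [e3] at h2
    nlinarith [h1, h2]
  · have e1 : (2*j+7)^2 = 4*(j^2+7*j+12) + 1 := by ring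
    have e2 : (2*j+6)^2 = 4*(j^2+6*j+9) := by ring
    rw [e1] at h1
    have e3 : (4*(j^2+7*j+12) + 1)/4 = j^2+7*j+12 := by omega
    rw [e3] at h1
    rw [e2, Nat.mul_div_cancel_left _ (by norm_num : (0:ℕ) < 4)] at h2
    have hj0 : j = 0 := by nlinarith [h1, h2]
    subst hj0
    norm_num at h1 h2 ⊢
    omega

lemma upper : ∀ (k : ℕ) (G : SimpleGraph (Fin (k+5))) (_ : DecidableRel G.Adj),
    (k+5)^2/4 + 2 ≤ #G.edgeFinset → Bt G := by
  intro k
  induction k with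
  | zero =>
    intro G inst h
    exact base5 G (le_trans (le_of_eq (by norm_num)) h)
  | succ k ih =>
    intro G inst h
    by_cases hv : ∃ v, G.degree v + ((k+5)^2/4 + 2) ≤ #G.edgeFinset
    · obtain ⟨v, hv⟩ := hv
      have hcd := card_del G v
      exact bt_del G v (ih (G.comap v.succAbove) inferInstance (by omega))
    · push_neg at hv
      have hsum : ∀ v : Fin (k+6), #G.edgeFinset ≤ G.degree v + ((k+5)^2/4 + 1) := by
        intro v; have := hv v; omega
      have H : (k+6) * #G.edgeFinset ≤ 2 * #G.edgeFinset + (k+6) * ((k+5)^2/4 + 1) := by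
        calc (k+6) * #G.edgeFinset = ∑ _v : Fin (k+6), #G.edgeFinset := by
              rw [Finset.sum_const, card_univ, Fintype.card_fin, smul_eq_mul]
        _ ≤ ∑ v, (G.degree v + ((k+5)^2/4+1)) := Finset.sum_le_sum fun v _ => hsum v
        _ = (∑ v, G.degree v) + (k+6)*((k+5)^2/4+1) := by
              rw [Finset.sum_add_distrib, Finset.sum_const, card_univ, Fintype.card_fin,
                smul_eq_mul]
        _ = 2 * #G.edgeFinset + (k+6)*((k+5)^2/4+1) := by
              rw [G.sum_degrees_eq_twice_card_edges]
      have harith := arith_main k _ h H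
      obtain ⟨hk1, he14⟩ := harith
      subst hk1
      have hdeglow : ∀ v : Fin 7, 4 ≤ G.degree v := by
        intro v
        have hle := hsum v
        have h10 : (1+5)^2/4+1 = 10 := by norm_num
        rw [h10] at hle
        omega
      have hsumdeg : ∑ v : Fin 7, G.degree v = 28 := by
        rw [G.sum_degrees_eq_twice_card_edges, he14]
      have hdeg : ∀ v : Fin 7, G.degree v = 4 := by
        intro v
        have herase : 6 * 4 ≤ ∑ u ∈ univ.erase v, G.degree u := by
          have hc : (univ.erase v).card = 6 := by
            rw [card_erase_of_mem (mem_univ v), card_univ, Fintype.card_fin]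
          calc 6*4 = (univ.erase v).card • 4 := by rw [hc]; simp
          _ ≤ ∑ u ∈ univ.erase v, G.degree u :=
              Finset.card_nsmul_le_sum _ _ _ fun u _ => hdeglow u
        have hadd : ∑ u ∈ univ.erase v, G.degree u + G.degree v = 28 := by
          rw [Finset.sum_erase_add _ _ (mem_univ v)]; exact hsumdeg
        have := hdeglow v
        omega
      exact seven hdeg

section Construction
variable (p : ℕ) (hp : 4 < p)

def csetP : Finset (Sym2 (Fin p)) :=
  ((univ.filter fun x : Fin p => x.val < p/2) ×ˢ
   (univ.filter fun x : Fin p => ¬ x.val < p/2)).image (fun z => s(z.1, z.2))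
  ∪ {s(⟨0, by omega⟩, ⟨1, by omega⟩)}

def cG : SimpleGraph (Fin p) := SimpleGraph.fromEdgeSet ↑(csetP p hp)

instance cGdec : DecidableRel (cG p hp).Adj := fun a b =>
  decidable_of_iff (s(a, b) ∈ csetP p hp ∧ a ≠ b)
    (by rw [cG, SimpleGraph.fromEdgeSet_adj, Finset.mem_coe])

lemma cG_adj {x y : Fin p} : (cG p hp).Adj x y ↔
    ((x.val < p/2 ∧ ¬ y.val < p/2) ∨ (y.val < p/2 ∧ ¬ x.val < p/2) ∨
      s(x, y) = s((⟨0, by omega⟩ : Fin p), (⟨1, by omega⟩ : Fin p))) := by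
  have h2 : 2 ≤ p/2 := by omega
  rw [cG, SimpleGraph.fromEdgeSet_adj, Finset.mem_coe, csetP, mem_union, mem_singleton,
    mem_image]
  constructor
  · rintro ⟨h | h, hne⟩
    · obtain ⟨⟨a, b⟩, hab, hs⟩ := h
      simp only [mem_product, mem_filter, mem_univ, true_and] at hab
      rw [Sym2.eq_iff] at hs
      rcases hs with ⟨rfl, rfl⟩ | ⟨rfl, rfl⟩
      · exact Or.inl ⟨hab.1, hab.2⟩
      · exact Or.inr (Or.inl ⟨hab.1, hab.2⟩)
    · exact Or.inr (Or.inr h)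
  · rintro (⟨hx, hy⟩ | ⟨hy, hx⟩ | h)
    · refine ⟨Or.inl ⟨(x, y), ?_, rfl⟩, fun hxy => hy (hxy ▸ hx)⟩
      simp only [mem_product, mem_filter, mem_univ, true_and]
      exact ⟨hx, hy⟩
    · refine ⟨Or.inl ⟨(y, x), ?_, Sym2.eq_swap⟩, fun hxy => hx (hxy ▸ hy)⟩
      simp only [mem_product, mem_filter, mem_univ, true_and]
      exact ⟨hy, hx⟩
    · refine ⟨Or.inr h, ?_⟩
      rw [Sym2.eq_iff] at h
      rcases h with ⟨rfl, rfl⟩ | ⟨rfl, rfl⟩ <;> simp [Fin.ne_of_val_ne]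
end Construction

section C2
variable (p : ℕ) (hp : 4 < p)

lemma cG_card : #(cG p hp).edgeFinset = p^2/4 + 1 := by
  classical
  have h2 : 2 ≤ p/2 := by omega
  set A := univ.filter fun x : Fin p => x.val < p/2 with hAdef
  set B := univ.filter fun x : Fin p => ¬ x.val < p/2 with hBdef
  have hA : #A = p/2 := by
    have himg : A.image Fin.val = Finset.range (p/2) := by
      ext y
      simp only [mem_image, mem_filter, mem_univ, true_and, mem_range, hAdef]
      constructor
      · rintro ⟨x, hx, rfl⟩; exact hx
      · intro hy; exact ⟨⟨y, by omega⟩, hy, rfl⟩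
    rw [← card_image_of_injective A Fin.val_injective, himg, card_range]
  have hAB : #A + #B = p := by
    rw [hAdef, hBdef, Finset.card_filter_add_card_filter_not, card_univ,
      Fintype.card_fin]
  have hndiag : ∀ e ∈ csetP p hp, ¬ e.IsDiag := by
    intro e he
    rw [csetP, mem_union, mem_singleton] at he
    rcases he with he | rfl
    · obtain ⟨⟨x, y⟩, hxy, rfl⟩ := mem_image.1 he
      simp only [mem_product, mem_filter, mem_univ, true_and] at hxy
      rw [Sym2.mk_isDiag_iff]
      intro h
      have h' : x = y := h
      exact hxy.2 (h' ▸ hxy.1)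
    · rw [Sym2.mk_isDiag_iff]
      intro hh
      have := congrArg Fin.val hh
      simp at this
  have hes : (cG p hp).edgeSet = ↑(csetP p hp) := by
    rw [cG, edgeSet_fromEdgeSet, sdiff_eq_left]
    rw [Set.disjoint_left]
    intro e he
    exact fun hd => hndiag e (by exact_mod_cast he) hd
  have h1 : (cG p hp).edgeFinset = (↑(csetP p hp) : Set (Sym2 (Fin p))).toFinset :=
    Set.toFinset_congr hes
  have h1' : (↑(csetP p hp) : Set (Sym2 (Fin p))).toFinset = csetP p hp :=
    Finset.coe_injective (Set.coe_toFinset _)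
  rw [h1, h1']
  have hnotmem : s((⟨0, by omega⟩ : Fin p), (⟨1, by omega⟩ : Fin p))
      ∉ (A ×ˢ B).image (fun z : Fin p × Fin p => s(z.1, z.2)) := by
    intro hmem
    obtain ⟨⟨x, y⟩, hxy, hs⟩ := mem_image.1 hmem
    simp only [mem_product, hAdef, hBdef, mem_filter, mem_univ, true_and] at hxy
    rw [Sym2.eq_iff] at hs
    rcases hs with ⟨rfl, rfl⟩ | ⟨rfl, rfl⟩
    · exact hxy.2 (by simp only [Fin.val_mk]; omega)
    · exact hxy.2 (by simp only [Fin.val_mk]; omega)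
  have hinj : Set.InjOn (fun z : Fin p × Fin p => s(z.1, z.2)) ↑(A ×ˢ B) := by
    rintro ⟨x, y⟩ hxy ⟨x', y'⟩ hxy' heq
    simp only [coe_product, Set.mem_prod, mem_coe, hAdef, hBdef, mem_filter, mem_univ,
      true_and] at hxy hxy'
    simp only [Sym2.eq_iff] at heq
    rcases heq with ⟨rfl, rfl⟩ | ⟨rfl, rfl⟩
    · rfl
    · exact absurd hxy.1 hxy'.2
  have hcount : #(csetP p hp) = p/2 * (p - p/2) + 1 := by
    rw [csetP, card_union_of_disjoint (Finset.disjoint_singleton_right.2 hnotmem), card_singleton,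
      card_image_of_injOn hinj, card_product, hA]
    have : #B = p - p/2 := by omega
    rw [this]
  rw [hcount]
  obtain ⟨j, hj⟩ : ∃ j, p = 2*j ∨ p = 2*j + 1 := ⟨p/2, by omega⟩
  rcases hj with rfl | rfl
  · have e1 : 2*j/2 = j := by omega
    have e2 : 2*j - j = j := by omega
    have e3 : (2*j)^2 = 4*(j*j) := by ring
    rw [e1, e2, e3, Nat.mul_div_cancel_left _ (by norm_num : (0:ℕ) < 4)]
  · have e1 : (2*j+1)/2 = j := by omega
    have e2 : 2*j+1 - j = j+1 := by omega
    have e3 : (2*j+1)^2 = 4*(j*(j+1)) + 1 := by ring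
    have e4 : (4*(j*(j+1)) + 1)/4 = j*(j+1) := by omega
    rw [e1, e2, e3, e4]

lemma cG_btfree : ¬ Bt (cG p hp) := by
  rintro ⟨a, b, c, d, e, hpw, h1, h2, h3, h4, h5, h6⟩
  simp only [List.pairwise_cons, List.mem_cons, List.not_mem_nil, or_false,
    List.mem_singleton, forall_eq_or_imp, forall_eq, List.Pairwise.nil, and_true] at hpw
  obtain ⟨⟨hab, hac, had, hae⟩, ⟨hbc, hbd, hbe⟩, ⟨hcd, hce⟩, hde⟩ := hpw
  set c0 : Fin p := ⟨0, by omega⟩ with hc0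
  set c1 : Fin p := ⟨1, by omega⟩ with hc1
  have tri : ∀ x y z : Fin p, (cG p hp).Adj x y → (cG p hp).Adj y z → (cG p hp).Adj z x →
      (x = c0 ∨ y = c0 ∨ z = c0) ∧ (x = c1 ∨ y = c1 ∨ z = c1) := by
    intro x y z hxy hyz hzx
    rw [cG_adj] at hxy hyz hzx
    rw [Sym2.eq_iff] at hxy hyz hzx
    rcases hxy with ⟨hx1, hx2⟩ | ⟨hx1, hx2⟩ | (⟨hx1, hx2⟩ | ⟨hx1, hx2⟩) <;>
      rcases hyz with ⟨hy1, hy2⟩ | ⟨hy1, hy2⟩ | (⟨hy1, hy2⟩ | ⟨hy1, hy2⟩) <;>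
        rcases hzx with ⟨hz1, hz2⟩ | ⟨hz1, hz2⟩ | (⟨hz1, hz2⟩ | ⟨hz1, hz2⟩) <;>
          first
          | omega
          | exact ⟨by tauto, by tauto⟩
  have t1 := tri a b c h1 h2 h3
  have t2 := tri a d e h4 h5 h6
  have key : ∀ w : Fin p, (a = w ∨ b = w ∨ c = w) → (a = w ∨ d = w ∨ e = w) → a = w := by
    rintro w (h|h|h) (h'|h'|h')
    · exact h
    · exact h
    · exact h
    · exact h'
    · exact absurd (h.trans h'.symm) hbd
    · exact absurd (h.trans h'.symm) hbe
    · exact h'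
    · exact absurd (h.trans h'.symm) hcd
    · exact absurd (h.trans h'.symm) hce
  have e0 : a = c0 := key c0 t1.1 t2.1
  have e1 : a = c1 := key c1 t1.2 t2.2
  have : c0 = c1 := e0 ▸ e1
  have := congrArg Fin.val this
  simp [hc0, hc1] at this
end C2


theorem stmt_19 (p : ℕ) (hp : 4 < p) :
    (∀ G : SimpleGraph (Fin p), ∀ _ : DecidableRel G.Adj,
      BowtieFree G → G.edgeFinset.card ≤ p ^ 2 / 4 + 1) ∧
    (∃ G : SimpleGraph (Fin p), ∃ _ : DecidableRel G.Adj,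
      BowtieFree G ∧ G.edgeFinset.card = p ^ 2 / 4 + 1) := by
  constructor
  · intro G inst hBF
    by_contra hgt
    push_neg at hgt
    obtain ⟨m, rfl⟩ : ∃ m, p = m + 5 := ⟨p - 5, by omega⟩
    exact hBF (upper m G inst (by omega))
  · exact ⟨cG p hp, cGdec p hp, cG_btfree p hp, cG_card p hp⟩
end
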